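/- Mass conservation for the linearized extrapolation (LE) scheme with discretized multiplicative noise: let Δt_{m−1}, Δt_m > 0, ε ∈ ℝ, let f̃_0, …, f̃_N be real numbers, let σ ≥ 1 be an integer, and let u^{m−1}, u^m, u^{m+1} ∈ ℂ^{N+1}. Assume that for every 0 ≤ j ≤ N one has i·(u^{m+1}_j − u^m_j)/Δt_m + D₂u^{m+1/2}_j + (1/2)·( ((2Δt_{m−1}+Δt_m)/Δt_{m−1})·|u^m_j|^{2σ} − (Δt_m/Δt_{m−1})·|u^{m−1}_j|^{2σ} )·u^{m+1/2}_j = ε·f̃_j·u^{m+1/2}_j, where u^{m+1/2}_j := (u^m_j + u^{m+1}_j)/2 (extended by the Neumann conventions). Then M_dis[u^{m+1}] = M_dis[u^m]. -/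

import Mathlib

/-!
Pair the `j`-th equation with `(Δx_j + Δx_{j-1}) · conj u^{m+1/2}_j`, take imaginary parts and
sum over `j`. The potential and noise terms are real multiples of `|u^{m+1/2}_j|²` and drop out,
the time difference becomes `(|u^{m+1}_j|² - |u^m_j|²) / (2Δt_m)`, and the weighted
second differences `(Δx_j + Δx_{j-1}) D₂u_j = 2 (F_j - F_{j-1})` are differences of the fluxes
`F_j = (u_{j+1} - u_j) / Δx_j`, which vanish at `j = -1` and `j = N` by the Neumann conventions;
summation by parts makes their contribution `-2 Σ_j |u_{j+1} - u_j|² / Δx_j`, again real.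
-/

open Finset

/-- Extended mesh size `Δx_j` for `j ∈ {-1, 0, …, N}`, with the conventions
`Δx_{-1} := Δx_0` and `Δx_N := Δx_{N-1}`. -/
noncomputable def meshDx (N : ℕ) (x : ℕ → ℝ) (j : ℤ) : ℝ :=
  if j ≤ 0 then x 1 - x 0
  else if (N : ℤ) ≤ j then x N - x (N - 1)
  else x (j.toNat + 1) - x j.toNat

/-- Neumann extension of a vector `u ∈ ℂ^{N+1}`: `u_{-1} := u_0`, `u_{N+1} := u_N`. -/
noncomputable def neumannExt (N : ℕ) (u : ℕ → ℂ) (j : ℤ) : ℂ :=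
  if j ≤ 0 then u 0
  else if (N : ℤ) ≤ j then u N
  else u j.toNat

/-- Discrete second-difference operator on the (possibly non-uniform) mesh. -/
noncomputable def D2 (N : ℕ) (x : ℕ → ℝ) (u : ℕ → ℂ) (j : ℕ) : ℂ :=
  2 * neumannExt N u ((j : ℤ) - 1) /
      ((meshDx N x ((j : ℤ) - 1) : ℂ) * ((meshDx N x ((j : ℤ) - 1) : ℂ) + (meshDx N x (j : ℤ) : ℂ)))
    - 2 * neumannExt N u (j : ℤ) / ((meshDx N x ((j : ℤ) - 1) : ℂ) * (meshDx N x (j : ℤ) : ℂ))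
    + 2 * neumannExt N u ((j : ℤ) + 1) /
      (((meshDx N x ((j : ℤ) - 1) : ℂ) + (meshDx N x (j : ℤ) : ℂ)) * (meshDx N x (j : ℤ) : ℂ))

/-- Discrete mass `M_dis[u] = (1/2)·Σ_{j=0}^{N} |u_j|²·(Δx_j + Δx_{j-1})`. -/
noncomputable def Mdis (N : ℕ) (x : ℕ → ℝ) (u : ℕ → ℂ) : ℝ :=
  (1 / 2) * ∑ j ∈ Finset.range (N + 1),
    ‖u j‖ ^ 2 * (meshDx N x (j : ℤ) + meshDx N x ((j : ℤ) - 1))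

open ComplexConjugate

theorem meshDx_pos {N : ℕ} (hN : 1 ≤ N) {x : ℕ → ℝ} (hx : ∀ j, j < N → x j < x (j + 1))
    (j : ℤ) : 0 < meshDx N x j := by
  unfold meshDx
  split_ifs
  · simpa using hx 0 hN
  · simpa [Nat.sub_add_cancel hN] using hx (N - 1) (by omega)
  · simpa using hx j.toNat (by omega)

theorem neumannExt_natCast {N : ℕ} (u : ℕ → ℂ) {k : ℕ} (hk : k ≤ N) :
    neumannExt N u k = u k := by
  unfold neumannExt
  split_ifs
  · rw [show k = 0 by omega]
  · rw [show k = N by omega]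
  · rfl

theorem neumannExt_of_nonpos (N : ℕ) (u : ℕ → ℂ) {j : ℤ} (hj : j ≤ 0) :
    neumannExt N u j = u 0 := if_pos hj

theorem neumannExt_of_le (N : ℕ) (u : ℕ → ℂ) {j : ℤ} (hj : N ≤ j) :
    neumannExt N u j = u N := by
  unfold neumannExt
  split_ifs
  · rw [show N = 0 by omega]
  · rfl

noncomputable def meshFlux (N : ℕ) (x : ℕ → ℝ) (u : ℕ → ℂ) (j : ℤ) : ℂ :=
  (neumannExt N u (j + 1) - neumannExt N u j) / meshDx N x j

theorem meshFlux_neg_one (N : ℕ) (x : ℕ → ℝ) (u : ℕ → ℂ) : meshFlux N x u (-1) = 0 := by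
  rw [meshFlux, neumannExt_of_nonpos N u (by norm_num), neumannExt_of_nonpos N u (by norm_num),
    sub_self, zero_div]

theorem meshFlux_natCast_self (N : ℕ) (x : ℕ → ℝ) (u : ℕ → ℂ) : meshFlux N x u N = 0 := by
  rw [meshFlux, neumannExt_of_le N u (by omega), neumannExt_of_le N u le_rfl, sub_self, zero_div]

theorem meshFlux_natCast_of_lt {N : ℕ} (x : ℕ → ℝ) (u : ℕ → ℂ) {j : ℕ} (hj : j < N) :
    meshFlux N x u j = (u (j + 1) - u j) / meshDx N x j := by
  rw [meshFlux, ← Nat.cast_succ, neumannExt_natCast u hj, neumannExt_natCast u hj.le]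

theorem meshDx_add_mul_D2 {N : ℕ} (hN : 1 ≤ N) {x : ℕ → ℝ}
    (hx : ∀ j, j < N → x j < x (j + 1)) (u : ℕ → ℂ) (j : ℕ) :
    ((meshDx N x j + meshDx N x (j - 1) : ℝ) : ℂ) * D2 N x u j
      = 2 * (meshFlux N x u j - meshFlux N x u (j - 1)) := by
  have hp := meshDx_pos hN hx (j - 1)
  have hq := meshDx_pos hN hx j
  have hp' : (meshDx N x (j - 1) : ℂ) ≠ 0 := by exact_mod_cast hp.ne'
  have hq' : (meshDx N x j : ℂ) ≠ 0 := by exact_mod_cast hq.ne'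
  have hpq : (meshDx N x (j - 1) : ℂ) + meshDx N x j ≠ 0 := by
    exact_mod_cast (add_pos hp hq).ne'
  simp only [D2, meshFlux, sub_add_cancel]
  push_cast
  field_simp
  ring

theorem sum_range_mul_sub_of_boundary_eq_zero {R : Type*} [CommRing R] (a : ℕ → R) (F : ℤ → R)
    (N : ℕ) (h_left : F (-1) = 0) (h_right : F N = 0) :
    ∑ j ∈ range (N + 1), a j * (F j - F (j - 1))
      = -∑ j ∈ range N, (a (j + 1) - a j) * F j := by
  have h_shift : ∑ j ∈ range (N + 1), a j * F (j - 1) = ∑ j ∈ range N, a (j + 1) * F j := by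
    rw [sum_range_succ']
    simp [h_left]
  simp only [mul_sub, sum_sub_distrib]
  rw [h_shift, sum_range_succ, h_right, mul_zero, add_zero]
  simp only [sub_mul, sum_sub_distrib, neg_sub]

theorem im_conj_mul_div_ofReal (z : ℂ) (r : ℝ) : (conj z * (z / r)).im = 0 := by
  rw [mul_div_assoc', mul_comm, Complex.mul_conj, ← Complex.ofReal_div]
  exact Complex.ofReal_im _

theorem sum_meshDx_add_mul_im_conj_mul_D2 {N : ℕ} (hN : 1 ≤ N) {x : ℕ → ℝ}
    (hx : ∀ j, j < N → x j < x (j + 1)) (u : ℕ → ℂ) :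
    ∑ j ∈ range (N + 1), (meshDx N x j + meshDx N x (j - 1)) * (conj (u j) * D2 N x u j).im
      = 0 := by
  have h_sum : ∑ j ∈ range (N + 1),
      ((meshDx N x j + meshDx N x (j - 1) : ℝ) : ℂ) * (conj (u j) * D2 N x u j)
        = -2 * ∑ j ∈ range N, conj (u (j + 1) - u j) * ((u (j + 1) - u j) / meshDx N x j) := by
    simp_rw [mul_left_comm _ (conj _), meshDx_add_mul_D2 hN hx, mul_left_comm _ (2 : ℂ),
      ← mul_sum, sum_range_mul_sub_of_boundary_eq_zero _ _ N (meshFlux_neg_one N x u)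
        (meshFlux_natCast_self N x u)]
    rw [mul_neg, neg_mul, neg_inj]
    refine congrArg _ (sum_congr rfl fun j hj => ?_)
    rw [meshFlux_natCast_of_lt x u (mem_range.mp hj), map_sub]
  have h_im := congrArg Complex.im h_sum
  simp only [Complex.im_sum, Complex.im_ofReal_mul] at h_im
  rw [h_im, show (-2 : ℂ) = ((-2 : ℝ) : ℂ) by push_cast; rfl, Complex.im_ofReal_mul,
    Complex.im_sum]
  simp only [im_conj_mul_div_ofReal, sum_const_zero, mul_zero]

open Complex in
theorem sq_norm_sub_sq_norm_of_midpoint_step {a b c : ℂ} {r s t : ℝ} (ht : t ≠ 0)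
    (h : I * (b - a) / t + c + r * ((a + b) / 2) = s * ((a + b) / 2)) :
    ‖b‖ ^ 2 - ‖a‖ ^ 2 = -(2 * t) * (conj ((a + b) / 2) * c).im := by
  obtain rfl : c = (s - r : ℝ) * ((a + b) / 2) - I * (b - a) / t := by
    push_cast
    linear_combination h
  simp only [Complex.sq_norm, normSq_apply, mul_im, mul_re, div_re, div_im, conj_re, conj_im,
    ofReal_re, ofReal_im, I_re, I_im, add_re, add_im, sub_re, sub_im, re_ofNat, im_ofNat]
  field_simp
  ring

theorem le_scheme_mass_conservation_general
    (N : ℕ) (hN : 1 ≤ N) (x : ℕ → ℝ) (hx : ∀ j, j < N → x j < x (j + 1))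
    (Δtm1 Δtm : ℝ) (hΔtm : 0 < Δtm) (ε : ℝ) (ftilde : ℕ → ℝ)
    (σ : ℕ) (um1 um up1 : ℕ → ℂ)
    (hscheme : ∀ j ≤ N,
      Complex.I * (up1 j - um j) / (Δtm : ℂ)
        + D2 N x (fun k => (um k + up1 k) / 2) j
        + (((1 / 2) * (((2 * Δtm1 + Δtm) / Δtm1) * ‖um j‖ ^ (2 * σ)
              - (Δtm / Δtm1) * ‖um1 j‖ ^ (2 * σ)) : ℝ) : ℂ) * ((um j + up1 j) / 2)
      = (ε : ℂ) * (ftilde j : ℂ) * ((um j + up1 j) / 2)) :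
    Mdis N x up1 = Mdis N x um := by
  set v : ℕ → ℂ := fun k => (um k + up1 k) / 2
  have h_step : ∀ j ∈ range (N + 1),
      ‖up1 j‖ ^ 2 - ‖um j‖ ^ 2 = -(2 * Δtm) * (conj (v j) * D2 N x v j).im := by
    intro j hj
    have h_j := hscheme j (Nat.lt_succ_iff.mp (mem_range.mp hj))
    rw [← Complex.ofReal_mul] at h_j
    exact sq_norm_sub_sq_norm_of_midpoint_step hΔtm.ne' h_j
  have h_diff : Mdis N x up1 - Mdis N x um = -Δtm * ∑ j ∈ range (N + 1),
      (meshDx N x j + meshDx N x (j - 1)) * (conj (v j) * D2 N x v j).im := by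
    simp only [Mdis, ← mul_sub, ← sum_sub_distrib, ← sub_mul, mul_sum]
    refine sum_congr rfl fun j hj => ?_
    rw [h_step j hj]
    ring
  rw [sum_meshDx_add_mul_im_conj_mul_D2 hN hx v, mul_zero, sub_eq_zero] at h_diff
  exact h_diff

/-- Mass conservation for the linearized extrapolation (LE) scheme with discretized
multiplicative noise. -/
theorem le_scheme_mass_conservation
    (N : ℕ) (hN : 1 ≤ N) (x : ℕ → ℝ) (hx : ∀ j, j < N → x j < x (j + 1))
    (Δtm1 Δtm : ℝ) (hΔtm1 : 0 < Δtm1) (hΔtm : 0 < Δtm) (ε : ℝ) (ftilde : ℕ → ℝ)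
    (σ : ℕ) (hσ : 1 ≤ σ) (um1 um up1 : ℕ → ℂ)
    (hscheme : ∀ j ≤ N,
      Complex.I * (up1 j - um j) / (Δtm : ℂ)
        + D2 N x (fun k => (um k + up1 k) / 2) j
        + (((1 / 2) * (((2 * Δtm1 + Δtm) / Δtm1) * ‖um j‖ ^ (2 * σ)
              - (Δtm / Δtm1) * ‖um1 j‖ ^ (2 * σ)) : ℝ) : ℂ) * ((um j + up1 j) / 2)
      = (ε : ℂ) * (ftilde j : ℂ) * ((um j + up1 j) / 2)) :
    Mdis N x up1 = Mdis N x um :=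
  le_scheme_mass_conservation_general N hN x hx Δtm1 Δtm hΔtm ε ftilde σ um1 um up1 hscheme
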